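/- arXiv:1810.01707 — 2 statements merged into one kernel-verified Lean document; each statement's English description precedes it below -/
import Mathlib

section
/- For every integer r ≥ 1 there exists N such that for all n ≥ N the following holds: for every nonempty X ⊆ [2,n], every MLCIF in ([n] choose r) which is optimal for X has rank one or two. -/
open Finset

/-- The family of all `r`-element subsets of `[n] = {1, …, n}`. -/
def chooseFam (n r : ℕ) : Finset (Finset ℕ) := (Finset.Icc 1 n).powersetCard r

/-- A family of sets is intersecting if any two members meet. -/
def IntersectingFam (𝒜 : Finset (Finset ℕ)) : Prop :=
  ∀ A ∈ 𝒜, ∀ B ∈ 𝒜, (A ∩ B).Nonempty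

/-- `DomLE B A` : writing the elements in increasing order, the `i`-th element
of `B` is at most the `i`-th element of `A` (and they have the same size). -/
def DomLE (B A : Finset ℕ) : Prop :=
  B.card = A.card ∧
  ∀ (i : ℕ) (hB : i < (B.sort (· ≤ ·)).length) (hA : i < (A.sort (· ≤ ·)).length),
    (B.sort (· ≤ ·)).get ⟨i, hB⟩ ≤ (A.sort (· ≤ ·)).get ⟨i, hA⟩

/-- A family of `r`-subsets of `[n]` is left-compressed if it is downward closed
under the domination order. -/
def LeftCompressed (n r : ℕ) (𝒜 : Finset (Finset ℕ)) : Prop :=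
  ∀ A ∈ 𝒜, ∀ B ∈ chooseFam n r, DomLE B A → B ∈ 𝒜

/-- A left-compressed intersecting family in `([n] choose r)`. -/
def IsLCIF (n r : ℕ) (𝒜 : Finset (Finset ℕ)) : Prop :=
  𝒜 ⊆ chooseFam n r ∧ IntersectingFam 𝒜 ∧ LeftCompressed n r 𝒜

/-- A maximal left-compressed intersecting family. -/
def IsMLCIF (n r : ℕ) (𝒜 : Finset (Finset ℕ)) : Prop :=
  IsLCIF n r 𝒜 ∧ ∀ ℬ : Finset (Finset ℕ), IsLCIF n r ℬ → 𝒜 ⊆ ℬ → ℬ = 𝒜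

/-- The number of members of `𝒜` hitting `X`. -/
def hit (X : Finset ℕ) (𝒜 : Finset (Finset ℕ)) : ℕ :=
  (𝒜.filter fun A => (A ∩ X).Nonempty).card

/-- An MLCIF optimal for `X`: it maximises `hit X` among all MLCIFs. -/
def OptimalMLCIF (n r : ℕ) (X : Finset ℕ) (𝒜 : Finset (Finset ℕ)) : Prop :=
  IsMLCIF n r 𝒜 ∧ ∀ ℬ : Finset (Finset ℕ), IsMLCIF n r ℬ → hit X ℬ ≤ hit X 𝒜

/-- An LCIF optimal for `X` among all LCIFs. -/
def OptimalLCIF (n r : ℕ) (X : Finset ℕ) (𝒜 : Finset (Finset ℕ)) : Prop :=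
  IsLCIF n r 𝒜 ∧ ∀ ℬ : Finset (Finset ℕ), IsLCIF n r ℬ → hit X ℬ ≤ hit X 𝒜

/-- The `t`-adjusted Hilton–Milner family. -/
def AHM (n r t : ℕ) : Finset (Finset ℕ) :=
  (chooseFam n r).filter fun A =>
    (1 ∈ A ∧ (A ∩ Finset.Icc 2 t).Nonempty) ∨ Finset.Icc 2 t ⊆ A

/-- The star: all `r`-subsets of `[n]` containing `1`. -/
def starFam (n r : ℕ) : Finset (Finset ℕ) :=
  (chooseFam n r).filter fun A => 1 ∈ A

/-- `G ⊆ [n]` is a potential generator of `𝒜`: every `A ∈ ([n] choose r)`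
containing `G` lies in `𝒜`. -/
def PotGen (n r : ℕ) (𝒜 : Finset (Finset ℕ)) (G : Finset ℕ) : Prop :=
  G ⊆ Finset.Icc 1 n ∧ ∀ A ∈ chooseFam n r, G ⊆ A → A ∈ 𝒜

open Classical in
/-- The canonical generating family: all inclusion-minimal potential generators. -/
noncomputable def canonGen (n r : ℕ) (𝒜 : Finset (Finset ℕ)) : Finset (Finset ℕ) :=
  (Finset.Icc 1 n).powerset.filter fun G =>
    PotGen n r 𝒜 G ∧ ∀ G' ⊆ G, PotGen n r 𝒜 G' → G' = G

/-- The rank of `𝒜`: the smallest size of a generator. -/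
noncomputable def rankFam (n r : ℕ) (𝒜 : Finset (Finset ℕ)) : ℕ :=
  sInf {k : ℕ | ∃ G ∈ canonGen n r 𝒜, G.card = k}

/-- The family generated by `𝒢` with respect to `n` and `r`. -/
def genFam (n r : ℕ) (𝒢 : Finset (Finset ℕ)) : Finset (Finset ℕ) :=
  (chooseFam n r).filter fun A => ∃ G ∈ 𝒢, G ⊆ A

/-- `𝒜 ∈ I_j`: an MLCIF of rank two whose generators of size two are precisely
`{1,2}, {1,3}, …, {1,j}`. -/
noncomputable def MemI (n r j : ℕ) (𝒜 : Finset (Finset ℕ)) : Prop :=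
  IsMLCIF n r 𝒜 ∧ rankFam n r 𝒜 = 2 ∧
    (canonGen n r 𝒜).filter (fun G => G.card = 2) =
      (Finset.Icc 2 j).image fun i => ({1, i} : Finset ℕ)

/-! If an optimal MLCIF `𝒜` had rank at least three, `[1,2]` would not be a potential generator,
and maximality produces a member `B ∈ 𝒜` missing `1` and `2`. A member `A ∈ 𝒜` with at most two
elements in `[2r]` would dominate `[1,2] ∪ T` for any `(r-2)`-set `T ⊆ [3,2r] \ B`, putting a set
disjoint from `B` into `𝒜`. So every member of `𝒜` has three elements in `[2r]`, whence
`|𝒜| ≤ C(2r,3) C(n-3,r-3)`, while the star hits `X` at least `C(n-2,r-2)` times: impossible once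
`n ≥ (2r)^4`. Rank zero is excluded because an intersecting family has no empty generator. -/

lemma mem_chooseFam {n r : ℕ} {A : Finset ℕ} :
    A ∈ chooseFam n r ↔ A ⊆ Icc 1 n ∧ A.card = r :=
  mem_powersetCard

lemma zero_notMem_of_mem_chooseFam {n r : ℕ} {A : Finset ℕ} (hA : A ∈ chooseFam n r) :
    0 ∉ A :=
  fun h => by simpa using (mem_chooseFam.1 hA).1 h

lemma IntersectingFam.not_disjoint {𝒜 : Finset (Finset ℕ)} (h : IntersectingFam 𝒜)
    {A B : Finset ℕ} (hA : A ∈ 𝒜) (hB : B ∈ 𝒜) : ¬Disjoint A B :=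
  not_disjoint_iff_nonempty_inter.2 (h A hA B hB)

section Domination

lemma sort_getElem_le_iff (S : Finset ℕ) {i : ℕ} (hi : i < (S.sort (· ≤ ·)).length) (m : ℕ) :
    (S.sort (· ≤ ·))[i] ≤ m ↔ i < #{s ∈ S | s ≤ m} := by
  have hf : (Set.ofPred (· ∈ S)).Finite := S.finite_toSet
  have hS : hf.toFinset = S := by ext; simp
  have hnth : Nat.nth (· ∈ S) i = (S.sort (· ≤ ·))[i] := by
    rw [Nat.nth_eq_getD_sort hf, hS, List.getD_eq_getElem]
  have hcount : Nat.count (· ∈ S) (m + 1) = #{s ∈ S | s ≤ m} := by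
    rw [Nat.count_eq_card_filter_range]
    congr 1
    ext s
    simp [and_comm]
  rw [← hnth, ← hcount]
  constructor
  · intro h
    have := Nat.count_monotone (· ∈ S) (Nat.add_le_add_right h 1)
    rw [Nat.count_nth_succ (fun _ => by simpa [hS, Finset.length_sort] using hi)] at this
    omega
  · exact fun h => Nat.lt_succ_iff.1 (Nat.nth_lt_of_lt_count h)

lemma domLE_iff {A B : Finset ℕ} :
    DomLE B A ↔ B.card = A.card ∧ ∀ m, #{a ∈ A | a ≤ m} ≤ #{b ∈ B | b ≤ m} := by
  refine and_congr_right fun hcard => ⟨fun h m => ?_, fun h i hB hA => ?_⟩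
  · by_contra! hlt
    set k := #{b ∈ B | b ≤ m}
    have hkA : k < (A.sort (· ≤ ·)).length := by
      rw [Finset.length_sort]; exact hlt.trans_le (Finset.card_filter_le _ _)
    have hkB : k < (B.sort (· ≤ ·)).length := by
      rw [Finset.length_sort, hcard]; rwa [Finset.length_sort] at hkA
    exact lt_irrefl k <| (sort_getElem_le_iff B hkB m).1 <|
      (h k hkB hkA).trans ((sort_getElem_le_iff A hkA m).2 hlt)
  · exact (sort_getElem_le_iff B hB _).2 (((sort_getElem_le_iff A hA _).1 le_rfl).trans_le (h _))

lemma domLE_refl (A : Finset ℕ) : DomLE A A :=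
  ⟨rfl, fun _ _ _ => le_rfl⟩

lemma DomLE.trans {A B C : Finset ℕ} (hCB : DomLE C B) (hBA : DomLE B A) : DomLE C A := by
  rw [domLE_iff] at *
  exact ⟨hCB.1.trans hBA.1, fun m => (hBA.2 m).trans (hCB.2 m)⟩

lemma Icc_subset_of_domLE {A B : Finset ℕ} {j : ℕ} (h : DomLE B A) (hA : Icc 1 j ⊆ A)
    (hB : 0 ∉ B) : Icc 1 j ⊆ B := by
  have hjA : #(Icc 1 j) ≤ #{a ∈ A | a ≤ j} :=
    card_le_card fun x hx => mem_filter.2 ⟨hA hx, (mem_Icc.1 hx).2⟩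
  have hBj : {b ∈ B | b ≤ j} ⊆ Icc 1 j := fun b hb => by
    obtain ⟨hbB, hbj⟩ := mem_filter.1 hb
    exact mem_Icc.2 ⟨Nat.pos_of_ne_zero (ne_of_mem_of_not_mem hbB hB), hbj⟩
  rw [← eq_of_subset_of_card_le hBj (hjA.trans ((domLE_iff.1 h).2 j))]
  exact filter_subset _ _

lemma domLE_of_Icc_subset {A C : Finset ℕ} {j M : ℕ} (hC : Icc 1 j ⊆ C) (hCM : C ⊆ Icc 1 M)
    (hA : 0 ∉ A) (hAM : #{a ∈ A | a ≤ M} ≤ j) (hcard : C.card = A.card) : DomLE C A := by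
  refine domLE_iff.2 ⟨hcard, fun m => ?_⟩
  rcases le_or_gt M m with hMm | hmM
  · rw [filter_true_of_mem fun c hc => (mem_Icc.1 (hCM hc)).2.trans hMm, hcard]
    exact card_filter_le _ _
  · have hAj : #{a ∈ A | a ≤ m} ≤ j :=
      (card_le_card fun a ha => mem_filter.2 ⟨(mem_filter.1 ha).1,
        (mem_filter.1 ha).2.trans hmM.le⟩).trans hAM
    have hAm : #{a ∈ A | a ≤ m} ≤ #(Icc 1 m) := card_le_card fun a ha => by
      obtain ⟨haA, ham⟩ := mem_filter.1 ha
      exact mem_Icc.2 ⟨Nat.pos_of_ne_zero (ne_of_mem_of_not_mem haA hA), ham⟩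
    have hCm : #(Icc 1 (min j m)) ≤ #{c ∈ C | c ≤ m} := card_le_card fun c hc => by
      obtain ⟨h1c, hcjm⟩ := mem_Icc.1 hc
      exact mem_filter.2 ⟨hC (mem_Icc.2 ⟨h1c, hcjm.trans (min_le_left _ _)⟩),
        hcjm.trans (min_le_right _ _)⟩
    simp only [Nat.card_Icc] at hAm hCm
    omega

lemma LeftCompressed.union {n r : ℕ} {𝒜 ℬ : Finset (Finset ℕ)} (h𝒜 : LeftCompressed n r 𝒜)
    (hℬ : LeftCompressed n r ℬ) : LeftCompressed n r (𝒜 ∪ ℬ) := by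
  intro A hA B hB hBA
  rcases mem_union.1 hA with hA | hA
  · exact mem_union_left _ (h𝒜 A hA B hB hBA)
  · exact mem_union_right _ (hℬ A hA B hB hBA)

open Classical in
lemma leftCompressed_filter_domLE (n r : ℕ) (A : Finset ℕ) :
    LeftCompressed n r {C ∈ chooseFam n r | DomLE C A} :=
  fun _ hB _ hC hCB => mem_filter.2 ⟨hC, hCB.trans (mem_filter.1 hB).2⟩

end Domination

lemma exists_superset_Icc_disjoint {B : Finset ℕ} {r j : ℕ} (hB : B.card = r) (hj : j ≤ r)
    (hBj : Disjoint B (Icc 1 j)) :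
    ∃ C, Icc 1 j ⊆ C ∧ C ⊆ Icc 1 (2 * r) ∧ C.card = r ∧ Disjoint B C := by
  have hroom : r - j ≤ #(Icc (j + 1) (2 * r) \ B) := by
    have := le_card_sdiff B (Icc (j + 1) (2 * r))
    rw [Nat.card_Icc, hB] at this
    omega
  obtain ⟨T, hT, hTcard⟩ := exists_subset_card_eq hroom
  have hTIcc : T ⊆ Icc (j + 1) (2 * r) := hT.trans sdiff_subset
  have hjT : Disjoint (Icc 1 j) T := disjoint_left.2 fun x hx hxT => by
    have := mem_Icc.1 (hTIcc hxT); have := mem_Icc.1 hx; omega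
  refine ⟨Icc 1 j ∪ T, subset_union_left, union_subset (Icc_subset_Icc_right (by omega))
    (hTIcc.trans (Icc_subset_Icc_left (by omega))), ?_, ?_⟩
  · rw [card_union_of_disjoint hjT, Nat.card_Icc, hTcard]
    omega
  · exact disjoint_union_right.2
      ⟨hBj, disjoint_left.2 fun x hxB hxT => (mem_sdiff.1 (hT hxT)).2 hxB⟩

section Star

lemma isLCIF_starFam (n r : ℕ) : IsLCIF n r (starFam n r) := by
  refine ⟨filter_subset _ _, fun A hA B hB => ⟨1, mem_inter.2 ⟨(mem_filter.1 hA).2,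
    (mem_filter.1 hB).2⟩⟩, fun A hA B hB hBA => mem_filter.2 ⟨hB, ?_⟩⟩
  simpa using Icc_subset_of_domLE (j := 1) hBA (by simpa using (mem_filter.1 hA).2)
    (zero_notMem_of_mem_chooseFam hB)

lemma isMLCIF_starFam {n r : ℕ} (hr : 1 ≤ r) (hn : 2 * r ≤ n) : IsMLCIF n r (starFam n r) := by
  refine ⟨isLCIF_starFam n r, fun ℬ hℬ hsub => subset_antisymm (fun B hB => ?_) hsub⟩
  refine mem_filter.2 ⟨hℬ.1 hB, by_contra fun h1B => ?_⟩
  obtain ⟨C, h1C, hC, hCcard, hBC⟩ :=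
    exists_superset_Icc_disjoint (mem_chooseFam.1 (hℬ.1 hB)).2 hr (by simpa using h1B)
  have hCstar : C ∈ starFam n r :=
    mem_filter.2 ⟨mem_chooseFam.2 ⟨hC.trans (Icc_subset_Icc_right hn), hCcard⟩, h1C (by simp)⟩
  exact hℬ.2.1.not_disjoint hB (hsub hCstar) hBC

lemma IsMLCIF.nonempty {n r : ℕ} {𝒜 : Finset (Finset ℕ)} (h : IsMLCIF n r 𝒜) (hr : 1 ≤ r)
    (hrn : r ≤ n) : 𝒜.Nonempty := by
  rw [nonempty_iff_ne_empty]
  intro h𝒜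
  have hstar := h.2 _ (isLCIF_starFam n r) (h𝒜 ▸ empty_subset _)
  have hmem : Icc 1 r ∈ starFam n r :=
    mem_filter.2 ⟨mem_chooseFam.2 ⟨Icc_subset_Icc_right hrn, by simp⟩, by simp; omega⟩
  simp [hstar, h𝒜] at hmem

lemma choose_le_hit_starFam {n r x : ℕ} {X : Finset ℕ} (hx : x ∈ X) (hx2 : 2 ≤ x) (hxn : x ≤ n)
    (hr : 2 ≤ r) : (n - 2).choose (r - 2) ≤ hit X (starFam n r) := by
  have hpair : ({1, x} : Finset ℕ) ⊆ Icc 1 n := by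
    intro y hy; simp only [mem_insert, mem_singleton] at hy; simp only [mem_Icc]; omega
  have hcard : ({1, x} : Finset ℕ).card = 2 := card_pair (by omega)
  calc (n - 2).choose (r - 2) = #{A ∈ chooseFam n r | {1, x} ⊆ A} := by
        rw [chooseFam, card_filter_powersetCard_subset _ _ _ hpair (by omega), hcard, Nat.card_Icc,
          Nat.add_sub_cancel]
    _ ≤ hit X (starFam n r) := card_le_card fun A hA => by
        obtain ⟨hA, h1xA⟩ := mem_filter.1 hA
        exact mem_filter.2
          ⟨mem_filter.2 ⟨hA, h1xA (by simp)⟩, ⟨x, mem_inter.2 ⟨h1xA (by simp), hx⟩⟩⟩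

end Star

section Generators

open Classical

variable {n r : ℕ} {𝒜 : Finset (Finset ℕ)}

lemma exists_canonGen_subset {G : Finset ℕ} (hG : PotGen n r 𝒜 G) :
    ∃ G' ∈ canonGen n r 𝒜, G' ⊆ G := by
  induction G using Finset.strongInduction with
  | _ G ih =>
    by_cases hmin : ∀ G' ⊆ G, PotGen n r 𝒜 G' → G' = G
    · exact ⟨G, mem_filter.2 ⟨mem_powerset.2 hG.1, hG, hmin⟩, subset_rfl⟩
    · push Not at hmin
      obtain ⟨G', hG'G, hG', hne⟩ := hmin
      obtain ⟨G'', hG'', hG''G'⟩ := ih G' (Finset.ssubset_iff_subset_ne.2 ⟨hG'G, hne⟩) hG'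
      exact ⟨G'', hG'', hG''G'.trans hG'G⟩

lemma rankFam_le_card {G : Finset ℕ} (hG : PotGen n r 𝒜 G) : rankFam n r 𝒜 ≤ G.card := by
  obtain ⟨G', hG', hG'G⟩ := exists_canonGen_subset hG
  exact (Nat.sInf_le (show G'.card ∈ {k | ∃ G ∈ canonGen n r 𝒜, G.card = k} from
    ⟨G', hG', rfl⟩)).trans (card_le_card hG'G)

lemma potGen_of_mem (h𝒜 : 𝒜 ⊆ chooseFam n r) {A : Finset ℕ} (hA : A ∈ 𝒜) :
    PotGen n r 𝒜 A := by
  obtain ⟨hAn, hAr⟩ := mem_chooseFam.1 (h𝒜 hA)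
  refine ⟨hAn, fun A' hA' hAA' => ?_⟩
  rwa [← eq_of_subset_of_card_le hAA' ((mem_chooseFam.1 hA').2.trans hAr.symm).le]

lemma potGen_Icc_of_lt (h : r < n) : PotGen n r 𝒜 (Icc 1 n) := by
  refine ⟨subset_rfl, fun A hA hnA => ?_⟩
  have := card_le_card hnA
  rw [Nat.card_Icc, (mem_chooseFam.1 hA).2] at this
  omega

lemma IntersectingFam.not_potGen_empty (h : IntersectingFam 𝒜) (hr : 1 ≤ r) (hn : 2 * r ≤ n) :
    ¬PotGen n r 𝒜 ∅ := by
  intro hG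
  have hlow := hG.2 (Icc 1 r) (mem_chooseFam.2 ⟨Icc_subset_Icc_right (by omega), by simp⟩)
    (empty_subset _)
  have hhigh := hG.2 (Icc (r + 1) (2 * r))
    (mem_chooseFam.2 ⟨Icc_subset_Icc (by omega) hn, by simp; omega⟩) (empty_subset _)
  obtain ⟨y, hy⟩ := h _ hlow _ hhigh
  simp only [mem_inter, mem_Icc] at hy
  omega

lemma IntersectingFam.rankFam_ne_zero (h : IntersectingFam 𝒜) (hr : 1 ≤ r) (hn : 2 * r ≤ n) :
    rankFam n r 𝒜 ≠ 0 := by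
  obtain ⟨G, hG, -⟩ := exists_canonGen_subset (𝒜 := 𝒜) (potGen_Icc_of_lt (by omega : r < n))
  intro h0
  rcases Nat.sInf_eq_zero.1 h0 with ⟨G', hG', hcard⟩ | hempty
  · rw [card_eq_zero.1 hcard] at hG'
    exact h.not_potGen_empty hr hn (mem_filter.1 hG').2.1
  · exact hempty.subset ⟨G, hG, rfl⟩

end Generators

section Counting

variable {n r : ℕ}

lemma card_le_choose_mul_choose {k M : ℕ} {𝒜 : Finset (Finset ℕ)} (h𝒜 : 𝒜 ⊆ chooseFam n r)
    (hM : M ≤ n) (hk : k ≤ r) (hlarge : ∀ A ∈ 𝒜, k ≤ #{a ∈ A | a ≤ M}) :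
    #𝒜 ≤ M.choose k * (n - k).choose (r - k) := by
  have hcover : 𝒜 ⊆ (powersetCard k (Icc 1 M)).biUnion fun T => {A ∈ chooseFam n r | T ⊆ A} := by
    intro A hA
    obtain ⟨T, hT, hTcard⟩ := exists_subset_card_eq (hlarge A hA)
    have hTA : T ⊆ A := hT.trans (filter_subset _ _)
    refine mem_biUnion.2 ⟨T, mem_powersetCard.2 ⟨fun t ht => ?_, hTcard⟩,
      mem_filter.2 ⟨h𝒜 hA, hTA⟩⟩
    obtain ⟨htA, htM⟩ := mem_filter.1 (hT ht)
    exact mem_Icc.2 ⟨(mem_Icc.1 ((mem_chooseFam.1 (h𝒜 hA)).1 htA)).1, htM⟩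
  calc #𝒜 ≤ ∑ T ∈ powersetCard k (Icc 1 M), #{A ∈ chooseFam n r | T ⊆ A} :=
        (card_le_card hcover).trans card_biUnion_le
    _ = ∑ T ∈ powersetCard k (Icc 1 M), (n - k).choose (r - k) := by
        refine sum_congr rfl fun T hT => ?_
        obtain ⟨hTM, hTcard⟩ := mem_powersetCard.1 hT
        rw [chooseFam, card_filter_powersetCard_subset _ _ _ (hTM.trans (Icc_subset_Icc_right hM))
          (hTcard ▸ hk), hTcard, Nat.card_Icc, Nat.add_sub_cancel]
    _ = M.choose k * (n - k).choose (r - k) := by simp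

lemma choose_three_mul_choose_lt (hr : 3 ≤ r) (hn : (2 * r) ^ 4 ≤ n) :
    (2 * r).choose 3 * (n - 3).choose (r - 3) < (n - 2).choose (r - 2) := by
  have h2r : 2 * r ≤ n := (Nat.le_self_pow (by norm_num) _).trans hn
  have hc : 0 < (n - 3).choose (r - 3) := Nat.choose_pos (by omega)
  have hpascal : (n - 2) * (n - 3).choose (r - 3) = (n - 2).choose (r - 2) * (r - 2) := by
    have := Nat.add_one_mul_choose_eq (n - 3) (r - 3)
    rwa [show n - 3 + 1 = n - 2 by omega, show r - 3 + 1 = r - 2 by omega] at this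
  have hsmall : (2 * r).choose 3 * (r - 2) < n - 2 := by
    have hcube : (2 * r).choose 3 ≤ (2 * r) ^ 3 := Nat.choose_le_pow _ _
    have hcube_pos : 8 ≤ (2 * r) ^ 3 := by
      calc 8 = 2 ^ 3 := by norm_num
        _ ≤ (2 * r) ^ 3 := Nat.pow_le_pow_left (by omega) 3
    have : (2 * r) ^ 3 * (r - 2) + 8 ≤ (2 * r) ^ 4 := by
      calc (2 * r) ^ 3 * (r - 2) + 8 ≤ (2 * r) ^ 3 * (r - 2) + (2 * r) ^ 3 * (r + 2) := by
            gcongr; nlinarith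
        _ = (2 * r) ^ 4 := by
            rw [← mul_add, show r - 2 + (r + 2) = 2 * r by omega]; ring
    calc (2 * r).choose 3 * (r - 2) ≤ (2 * r) ^ 3 * (r - 2) := Nat.mul_le_mul_right _ hcube
      _ < n - 2 := by omega
  refine Nat.lt_of_mul_lt_mul_right (a := r - 2) ?_
  rw [← hpascal, mul_right_comm]
  exact Nat.mul_lt_mul_of_pos_right hsmall hc

end Counting

section Optimal

variable {n r : ℕ} {𝒜 : Finset (Finset ℕ)}

open Classical in
lemma IsMLCIF.exists_disjoint_Icc_of_not_potGen (h : IsMLCIF n r 𝒜) {j : ℕ} (hj : 1 ≤ j)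
    (hjn : j ≤ n) (hG : ¬PotGen n r 𝒜 (Icc 1 j)) : ∃ B ∈ 𝒜, Disjoint B (Icc 1 j) := by
  obtain ⟨A', hA', hjA', hA'𝒜⟩ : ∃ A' ∈ chooseFam n r, Icc 1 j ⊆ A' ∧ A' ∉ 𝒜 := by
    by_contra! h'
    exact hG ⟨Icc_subset_Icc_right hjn, h'⟩
  set 𝒞 := {C ∈ chooseFam n r | DomLE C A'}
  have h𝒞 : ∀ C ∈ 𝒞, Icc 1 j ⊆ C := fun C hC =>
    Icc_subset_of_domLE (mem_filter.1 hC).2 hjA' (zero_notMem_of_mem_chooseFam (mem_filter.1 hC).1)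
  by_contra! hmeet
  have hint : IntersectingFam (𝒜 ∪ 𝒞) := by
    have h1 : 1 ∈ Icc 1 j := mem_Icc.2 ⟨le_rfl, hj⟩
    intro P hP Q hQ
    rw [← not_disjoint_iff_nonempty_inter]
    rcases mem_union.1 hP with hP | hP <;> rcases mem_union.1 hQ with hQ | hQ
    · exact h.1.2.1.not_disjoint hP hQ
    · exact fun hPQ => hmeet P hP (hPQ.mono_right (h𝒞 Q hQ))
    · exact fun hPQ => hmeet Q hQ (hPQ.symm.mono_right (h𝒞 P hP))
    · exact not_disjoint_iff.2 ⟨1, h𝒞 P hP h1, h𝒞 Q hQ h1⟩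
  have hgrow := h.2 (𝒜 ∪ 𝒞) ⟨union_subset h.1.1 (filter_subset _ _), hint,
    h.1.2.2.union (leftCompressed_filter_domLE n r A')⟩ subset_union_left
  exact hA'𝒜 (hgrow ▸ mem_union_right _ (mem_filter.2 ⟨hA', domLE_refl A'⟩))

lemma IsLCIF.lt_card_filter_le (h : IsLCIF n r 𝒜) {B : Finset ℕ} (hB : B ∈ 𝒜) {j : ℕ}
    (hBj : Disjoint B (Icc 1 j)) (hj : j ≤ r) (hn : 2 * r ≤ n) {A : Finset ℕ} (hA : A ∈ 𝒜) :
    j < #{a ∈ A | a ≤ 2 * r} := by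
  obtain ⟨C, hjC, hC, hCcard, hBC⟩ :=
    exists_superset_Icc_disjoint (mem_chooseFam.1 (h.1 hB)).2 hj hBj
  by_contra! hsmall
  have hCA : DomLE C A := domLE_of_Icc_subset hjC hC (zero_notMem_of_mem_chooseFam (h.1 hA))
    hsmall (hCcard.trans (mem_chooseFam.1 (h.1 hA)).2.symm)
  have hC𝒜 := h.2.2 A hA C (mem_chooseFam.2 ⟨hC.trans (Icc_subset_Icc_right hn), hCcard⟩) hCA
  exact h.2.1.not_disjoint hB hC𝒜 hBC

lemma potGen_Icc_one_two_of_optimal {X : Finset ℕ} (h : OptimalMLCIF n r X 𝒜)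
    (hX : X ⊆ Icc 2 n) (hXne : X.Nonempty) (hr : 3 ≤ r) (hn : (2 * r) ^ 4 ≤ n) :
    PotGen n r 𝒜 (Icc 1 2) := by
  have h2r : 2 * r ≤ n := (Nat.le_self_pow (by norm_num) _).trans hn
  obtain ⟨x, hx⟩ := hXne
  obtain ⟨hx2, hxn⟩ := mem_Icc.1 (hX hx)
  by_contra hG
  obtain ⟨B, hB, hB12⟩ := h.1.exists_disjoint_Icc_of_not_potGen (by norm_num) (by omega) hG
  have hlarge : ∀ A ∈ 𝒜, 3 ≤ #{a ∈ A | a ≤ 2 * r} :=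
    fun _ hA => h.1.1.lt_card_filter_le hB hB12 (by omega) h2r hA
  refine (choose_three_mul_choose_lt hr hn).not_ge ?_
  calc (n - 2).choose (r - 2) ≤ hit X (starFam n r) := choose_le_hit_starFam hx hx2 hxn (by omega)
    _ ≤ hit X 𝒜 := h.2 _ (isMLCIF_starFam (by omega) h2r)
    _ ≤ #𝒜 := card_filter_le _ _
    _ ≤ (2 * r).choose 3 * (n - 3).choose (r - 3) :=
        card_le_choose_mul_choose h.1.1.1 h2r (by omega) hlarge

end Optimal

/-- For every `r ≥ 1` and `n` sufficiently large: for every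
nonempty `X ⊆ [2,n]`, every MLCIF optimal for `X` has rank one or two. -/
theorem stmt9 :
    ∀ r : ℕ, 1 ≤ r → ∃ N : ℕ, ∀ n : ℕ, N ≤ n →
      ∀ X : Finset ℕ, X ⊆ Finset.Icc 2 n → X.Nonempty →
        ∀ 𝒜 : Finset (Finset ℕ), OptimalMLCIF n r X 𝒜 →
          rankFam n r 𝒜 = 1 ∨ rankFam n r 𝒜 = 2 := by
  intro r hr
  refine ⟨(2 * r) ^ 4, fun n hn X hX hXne 𝒜 h𝒜 => ?_⟩
  have h2r : 2 * r ≤ n := (Nat.le_self_pow (by norm_num) _).trans hn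
  have hpos := h𝒜.1.1.2.1.rankFam_ne_zero hr h2r
  have hle : rankFam n r 𝒜 ≤ 2 := by
    rcases le_or_gt r 2 with hr2 | hr3
    · obtain ⟨A, hA⟩ := h𝒜.1.nonempty hr (by omega)
      exact (rankFam_le_card (potGen_of_mem h𝒜.1.1.1 hA)).trans
        ((mem_chooseFam.1 (h𝒜.1.1.1 hA)).2.trans_le hr2)
    · exact (rankFam_le_card (potGen_Icc_one_two_of_optimal h𝒜 hX hXne hr3 hn)).trans (by simp)
  omega
end

section
/- Let n ≥ 2r with r ≥ 2, and let 𝒜 be an MLCIF on ([n] choose r). If {2,3} is a generator of 𝒜 (i.e. {2,3} belongs to the canonical generating family of 𝒜), then 𝒜 = AHM_3. -/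
open Finset

/-!
Since `{2, 3}` is a potential generator and `n ≥ 2r`, every member `C` of `𝒜` meets `{2, 3}`:
otherwise `{2, 3}` extends to an `r`-set avoiding `C`, which lies in `𝒜`. Left compression does
the rest. A member avoiding `1` that contains only one of `2, 3` could trade it for `1` and would
then miss `{2, 3}`. Conversely, an `r`-set containing `1` and one of `2, 3` is dominated by the set
obtained by trading `1` for the other one, and that set contains `{2, 3}`.
-/

theorem Monotone.le_iff_lt_card_filter {α : Type*} [LinearOrder α] {m : ℕ} {f : Fin m → α}
    (hf : Monotone f) (i : Fin m) (k : α) :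
    f i ≤ k ↔ (i : ℕ) < #{j | f j ≤ k} := by
  constructor
  · intro hik
    have hsub : Iic i ⊆ ({j | f j ≤ k} : Finset (Fin m)) := fun j hj =>
      mem_filter.2 ⟨mem_univ j, (hf (mem_Iic.1 hj)).trans hik⟩
    simpa using card_le_card hsub
  · intro hlt
    by_contra! hki
    have hsub : ({j | f j ≤ k} : Finset (Fin m)) ⊆ Iio i := fun j hj => by
      rw [mem_Iio]
      by_contra! hij
      exact (hki.trans_le (hf hij)).not_ge (mem_filter.1 hj).2
    simpa using (card_le_card hsub).trans_lt' hlt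

theorem Finset.sort_get_le_iff (B : Finset ℕ) (i : ℕ) (hi : i < (B.sort (· ≤ ·)).length) (k : ℕ) :
    (B.sort (· ≤ ·)).get ⟨i, hi⟩ ≤ k ↔ i < #{x ∈ B | x ≤ k} := by
  have hi' : i < #B := by rwa [length_sort] at hi
  have key := (B.orderEmbOfFin rfl).monotone.le_iff_lt_card_filter ⟨i, hi'⟩ k
  rw [orderEmbOfFin_apply] at key
  rw [List.get_eq_getElem]
  refine key.trans ?_
  conv_rhs => rw [← B.map_orderEmbOfFin_univ rfl, filter_map, card_map]
  rfl

theorem domLE_of_card_filter_le {A B : Finset ℕ} (hcard : #B = #A)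
    (hle : ∀ k, #{x ∈ A | x ≤ k} ≤ #{x ∈ B | x ≤ k}) : DomLE B A := by
  refine ⟨hcard, fun i hB hA => ?_⟩
  rw [B.sort_get_le_iff]
  exact (((A.sort_get_le_iff i hA _).1 le_rfl).trans_le (hle _))

theorem domLE_insert_erase {A : Finset ℕ} {x y : ℕ} (hx : x ∈ A) (hy : y ∉ A) (hyx : y ≤ x) :
    DomLE (insert y (A.erase x)) A := by
  have hy' : y ∉ A.erase x := fun h => hy (mem_of_mem_erase h)
  refine domLE_of_card_filter_le ?_ fun k => ?_
  · rw [card_insert_of_notMem hy', card_erase_add_one hx]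
  by_cases hxk : x ≤ k
  · have hxf : x ∈ ({z ∈ A | z ≤ k} : Finset ℕ) := mem_filter.2 ⟨hx, hxk⟩
    rw [filter_insert, if_pos (hyx.trans hxk), filter_erase,
      card_insert_of_notMem fun h => hy (mem_filter.1 (mem_of_mem_erase h)).1,
      card_erase_add_one hxf]
  · refine card_le_card fun z hz => ?_
    obtain ⟨hzA, hzk⟩ := mem_filter.1 hz
    exact mem_filter.2 ⟨mem_insert_of_mem (mem_erase.2 ⟨by omega, hzA⟩), hzk⟩

theorem potGen_of_mem_canonGen {n r : ℕ} {𝒜 : Finset (Finset ℕ)} {G : Finset ℕ}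
    (hG : G ∈ canonGen n r 𝒜) : PotGen n r 𝒜 G := by
  classical
  exact (mem_filter.1 hG).2.1

theorem insert_erase_mem_chooseFam {n r : ℕ} {A : Finset ℕ} {x y : ℕ} (hA : A ∈ chooseFam n r)
    (hx : x ∈ A) (hy : y ∉ A) (hyn : y ∈ Icc 1 n) : insert y (A.erase x) ∈ chooseFam n r := by
  obtain ⟨hAn, hAr⟩ := mem_powersetCard.1 hA
  refine mem_powersetCard.2 ⟨insert_subset hyn ((erase_subset x A).trans hAn), ?_⟩
  rw [card_insert_of_notMem fun h => hy (mem_of_mem_erase h), card_erase_add_one hx, hAr]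

section

variable {n r : ℕ} {𝒜 : Finset (Finset ℕ)} {G A : Finset ℕ}

theorem IntersectingFam.inter_nonempty_of_potGen (h𝒜 : IntersectingFam 𝒜)
    (hsub : 𝒜 ⊆ chooseFam n r) (hG : PotGen n r 𝒜 G) (hGr : #G ≤ r) (hn : 2 * r ≤ n)
    (hA : A ∈ 𝒜) : (A ∩ G).Nonempty := by
  by_contra hAG
  rw [not_nonempty_iff_eq_empty, ← disjoint_iff_inter_eq_empty] at hAG
  obtain ⟨hAn, hAr⟩ := mem_powersetCard.1 (hsub hA)
  have hroom : r ≤ #(Icc 1 n \ A) := by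
    rw [card_sdiff_of_subset hAn, Nat.card_Icc]
    omega
  obtain ⟨D, hGD, hDA, hDr⟩ :=
    exists_subsuperset_card_eq (subset_sdiff.2 ⟨hG.1, hAG.symm⟩) hGr hroom
  have hD : D ∈ 𝒜 := hG.2 D (mem_powersetCard.2 ⟨hDA.trans sdiff_subset, hDr⟩) hGD
  obtain ⟨z, hz⟩ := h𝒜 A hA D hD
  exact (mem_sdiff.1 (hDA (mem_inter.1 hz).2)).2 (mem_inter.1 hz).1

theorem LeftCompressed.insert_erase_mem (h𝒜 : LeftCompressed n r 𝒜) (hsub : 𝒜 ⊆ chooseFam n r)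
    (hA : A ∈ 𝒜) {x y : ℕ} (hx : x ∈ A) (hy : y ∉ A) (hy1 : 1 ≤ y) (hyx : y ≤ x) :
    insert y (A.erase x) ∈ 𝒜 := by
  have hxn := (mem_powersetCard.1 (hsub hA)).1 hx
  refine h𝒜 A hA _ (insert_erase_mem_chooseFam (hsub hA) hx hy ?_) (domLE_insert_erase hx hy hyx)
  exact mem_Icc.2 ⟨hy1, hyx.trans (mem_Icc.1 hxn).2⟩

theorem LeftCompressed.one_lt_card_inter (h𝒜 : LeftCompressed n r 𝒜)
    (hsub : 𝒜 ⊆ chooseFam n r) (hmeet : ∀ C ∈ 𝒜, (C ∩ G).Nonempty) (h1G : 1 ∉ G)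
    (hA : A ∈ 𝒜) (h1A : 1 ∉ A) : 1 < #(A ∩ G) := by
  obtain ⟨x, hx⟩ := hmeet A hA
  obtain ⟨hxA, hxG⟩ := mem_inter.1 hx
  have hx1 : 1 ≤ x := (mem_Icc.1 ((mem_powersetCard.1 (hsub hA)).1 hxA)).1
  obtain ⟨z, hz⟩ := hmeet _ (h𝒜.insert_erase_mem hsub hA hxA h1A le_rfl hx1)
  obtain ⟨hzA, hzG⟩ := mem_inter.1 hz
  have hz : z ∈ A.erase x := (mem_insert.1 hzA).resolve_left (by rintro rfl; exact h1G hzG)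
  exact one_lt_card.2 ⟨x, hx, z, mem_inter.2 ⟨mem_of_mem_erase hz, hzG⟩, (ne_of_mem_erase hz).symm⟩

theorem LeftCompressed.mem_of_one_mem (h𝒜 : LeftCompressed n r 𝒜) (hG : PotGen n r 𝒜 G)
    (h1G : 1 ∉ G) (hA : A ∈ chooseFam n r) (h1A : 1 ∈ A) (hGA : #(G \ A) ≤ 1) : A ∈ 𝒜 := by
  by_cases hGA' : G ⊆ A
  · exact hG.2 A hA hGA'
  obtain ⟨o, hoG, hoA⟩ := not_subset.1 hGA'
  have hmissing : ∀ g ∈ G, g ∉ A → g = o := fun g hg hgA =>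
    card_le_one.1 hGA g (mem_sdiff.2 ⟨hg, hgA⟩) o (mem_sdiff.2 ⟨hoG, hoA⟩)
  have ho1 : o ≠ 1 := by rintro rfl; exact h1G hoG
  have hoA' : o ∉ A.erase 1 := fun h => hoA (mem_of_mem_erase h)
  set A' := insert o (A.erase 1)
  have hGA' : G ⊆ A' := fun g hg => by
    by_cases hgA : g ∈ A
    · exact mem_insert_of_mem (mem_erase.2 ⟨by rintro rfl; exact h1G hg, hgA⟩)
    · exact hmissing g hg hgA ▸ mem_insert_self o _
  have hA'𝒜 : A' ∈ 𝒜 := hG.2 A' (insert_erase_mem_chooseFam hA h1A hoA (hG.1 hoG)) hGA'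
  have hdom := domLE_insert_erase (mem_insert_self o (A.erase 1))
    (by simpa [A', eq_comm] using ho1) (mem_Icc.1 (hG.1 hoG)).1
  rw [erase_insert hoA', insert_erase h1A] at hdom
  exact h𝒜 A' hA'𝒜 A hA hdom

end

/-- For `n ≥ 2r`, `r ≥ 2`, if `{2,3}` is a generator of an MLCIF
`𝒜` (i.e. belongs to its canonical generating family) then `𝒜 = AHM_3`. -/
theorem stmt12 (n r : ℕ) (hr : 2 ≤ r) (hn : 2 * r ≤ n) (𝒜 : Finset (Finset ℕ))
    (hA : IsMLCIF n r 𝒜) (hgen : ({2, 3} : Finset ℕ) ∈ canonGen n r 𝒜) :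
    𝒜 = AHM n r 3 := by
  obtain ⟨⟨hsub, hint, hlc⟩, -⟩ := hA
  have hpot : PotGen n r 𝒜 {2, 3} := potGen_of_mem_canonGen hgen
  have h1G : (1 : ℕ) ∉ ({2, 3} : Finset ℕ) := by decide
  have hmeet : ∀ C ∈ 𝒜, (C ∩ {2, 3}).Nonempty := fun C hC =>
    hint.inter_nonempty_of_potGen hsub hpot (by rwa [card_pair (by decide)]) hn hC
  ext A
  rw [AHM, mem_filter, show Icc 2 3 = ({2, 3} : Finset ℕ) by decide]
  constructor
  · intro hmem
    refine ⟨hsub hmem, or_iff_not_imp_left.2 fun hnot => ?_⟩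
    have h1A : 1 ∉ A := fun h1A => hnot ⟨h1A, hmeet A hmem⟩
    have hcard := hlc.one_lt_card_inter hsub hmeet h1G hmem h1A
    rw [← inter_eq_right]
    exact eq_of_subset_of_card_le inter_subset_right (by rw [card_pair (by decide)]; omega)
  · rintro ⟨hAn, ⟨h1A, hAG⟩ | hGA⟩
    · refine hlc.mem_of_one_mem hpot h1G hAn h1A ?_
      rw [card_sdiff, card_pair (by decide)]
      have := hAG.card_pos
      omega
    · exact hpot.2 A hAn hGA
end
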